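/- Let (ξ_k)_{k≥1} be i.i.d. ℤ²-valued random variables with law ν. Define the process (Z_k)_{k≥0} by Z_0 = 0 and: if ξ_{k+1} = (1,−1) then Z_{k+1} = Z_k − 1; if ξ_{k+1} = (−i,j) with i,j ≥ 0 then Z_{k+1} = Z_k + j if Z_k ≥ 0, Z_{k+1} = Z_k + i if Z_k < 0 and Z_k < −i, and Z_{k+1} = j if Z_k < 0 and Z_k ≥ −i. Then (Z_k)_{k≥0} is a random walk: its increments (Z_{k+1} − Z_k)_{k≥0} are independent and identically distributed with law μ on ℤ given by μ({−1}) = 1/2 and μ({j}) = 2^{−j−2} for every j ∈ ℤ_{≥0}. -/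

import Mathlib

open MeasureTheory ProbabilityTheory
open scoped ENNReal

/-- The mass function of the step distribution `ν`:
`ν({(1,-1)}) = 1/2` and `ν({(-i,j)}) = 2^{-i-j-3}` for `i, j ≥ 0`. -/
noncomputable def nuMass (d : ℤ × ℤ) : ℝ≥0∞ :=
  if d = (1, -1) then 1 / 2
  else if d.1 ≤ 0 ∧ 0 ≤ d.2 then 2⁻¹ ^ (-d.1 + d.2 + 3).toNat
  else 0

/-- The mass function of the law `μ` on `ℤ`:
`μ({-1}) = 1/2` and `μ({j}) = 2^{-j-2}` for `j ≥ 0`. -/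
noncomputable def muMass (z : ℤ) : ℝ≥0∞ :=
  if z = -1 then 1 / 2
  else if 0 ≤ z then 2⁻¹ ^ (z + 2).toNat
  else 0

/-- One step of the coalescent walk: if the walk increment is `(1,-1)` the trajectory decreases
by `1`; if it is `(-i,j)` the trajectory moves to `z+j` if `z ≥ 0`, to `z+i` if `z < -i`, and
to `j` if `-i ≤ z < 0`. -/
def zstep (d : ℤ × ℤ) (z : ℤ) : ℤ :=
  if d = (1, -1) then z - 1
  else if 0 ≤ z then z + d.2
  else if z < d.1 then z - d.1
  else d.2

/-- The process `(Z_k)_{k≥0}` driven by the steps `ξ`: `Z_0 = 0` and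
`Z_{k+1} = zstep (ξ_k) (Z_k)`. -/
def Zproc {Ω : Type*} (ξ : ℕ → Ω → ℤ × ℤ) : ℕ → Ω → ℤ
  | 0 => fun _ => 0
  | k + 1 => fun ω => zstep (ξ k ω) (Zproc ξ k ω)

/-! The law `ν` gives mass `2^{-i-j-3}` to the step `(-i, j)`. From a state `z`, with
`m = max (-z) 0`, this step moves the walk by the first coordinate of `foldAt m (i, j)`, and
`foldAt m` is an involution of `ℕ × ℕ` preserving `i + j`; so the increment out of every fixed
state has law `μ`. Since `Z_k` is a function of `ξ_0, …, ξ_{k-1}`, which are independent of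
`ξ_k`, conditioning on the value of `Z_k` shows that each increment has law `μ` independently of
the past, and independence of all increments follows by induction on the largest index. -/

lemma MeasureTheory.measure_eq_tsum_inter_preimage_singleton {Ω S : Type*}
    {mΩ : MeasurableSpace Ω} [MeasurableSpace S] [Countable S] [MeasurableSingletonClass S]
    {μ : Measure Ω} {W : Ω → S} (hW : Measurable W) (C : Set Ω) :
    μ C = ∑' s, μ (C ∩ W ⁻¹' {s}) := by
  calc μ C = μ.restrict C (W ⁻¹' Set.univ) := by simp
    _ = ∑' s : (Set.univ : Set S), μ.restrict C (W ⁻¹' {↑s}) :=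
        (tsum_measure_preimage_singleton (Set.to_countable _)
          fun s _ => hW (measurableSet_singleton s)).symm
    _ = ∑' s, μ (C ∩ W ⁻¹' {s}) := by
        rw [tsum_univ (f := fun s => μ.restrict C (W ⁻¹' {s}))]
        simp only [Measure.restrict_apply (hW (measurableSet_singleton _)), Set.inter_comm]

section StateDriven

variable {Ω E S T : Type*} [MeasurableSpace E] [MeasurableSpace S] [MeasurableSpace T]

lemma measure_inter_preimage_eq_mul_of_indep [Countable S] [MeasurableSingletonClass S]
    {m₀ mΩ : MeasurableSpace Ω} {μ : Measure Ω} (hm₀ : m₀ ≤ mΩ) {X : Ω → E}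
    (hind : Indep m₀ (MeasurableSpace.comap X inferInstance) μ) {W : Ω → S}
    (hW : Measurable[m₀] W) {h : E → S → T} (hh : Measurable (Function.uncurry h))
    {ρ : Measure T} (hlaw : ∀ s, HasLaw (fun ω => h (X ω) s) ρ μ) {A : Set Ω}
    (hA : MeasurableSet[m₀] A) {B : Set T} (hB : MeasurableSet B) :
    μ (A ∩ (fun ω => h (X ω) (W ω)) ⁻¹' B) = μ A * ρ B := by
  have hfiber (s : S) : μ (A ∩ (fun ω => h (X ω) (W ω)) ⁻¹' B ∩ W ⁻¹' {s})
      = μ (A ∩ W ⁻¹' {s}) * ρ B := by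
    have hset : A ∩ (fun ω => h (X ω) (W ω)) ⁻¹' B ∩ W ⁻¹' {s}
        = (A ∩ W ⁻¹' {s}) ∩ X ⁻¹' ((fun e => h e s) ⁻¹' B) := by
      ext ω
      simp only [Set.mem_inter_iff, Set.mem_preimage, Set.mem_singleton_iff]
      grind
    rw [hset, (Indep_iff _ _ μ).1 hind _ _ (hA.inter (hW (measurableSet_singleton s)))
      ⟨_, hh.of_uncurry_right hB, rfl⟩]
    exact congrArg (_ * ·) ((hlaw s).measure_eq hB)
  have hWΩ : Measurable W := hW.mono hm₀ le_rfl
  rw [measure_eq_tsum_inter_preimage_singleton hWΩ, tsum_congr hfiber, ENNReal.tsum_mul_right,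
    ← measure_eq_tsum_inter_preimage_singleton hWΩ]

abbrev pastSigma (ξ : ℕ → Ω → E) (n : ℕ) : MeasurableSpace Ω :=
  ⨆ i ∈ Set.Iio n, MeasurableSpace.comap (ξ i) inferInstance

variable {ξ : ℕ → Ω → E}

lemma pastSigma_mono : Monotone (pastSigma ξ) :=
  fun _ _ hmn => biSup_mono fun _ hi => lt_of_lt_of_le hi hmn

lemma measurable_pastSigma {k n : ℕ} (hkn : k < n) : Measurable[pastSigma ξ n] (ξ k) :=
  Measurable.of_comap_le (le_iSup₂ (f := fun i (_ : i ∈ Set.Iio n) =>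
    MeasurableSpace.comap (ξ i) inferInstance) k hkn)

variable {mΩ : MeasurableSpace Ω} {μ : Measure Ω}

lemma pastSigma_le (hξ : ∀ k, Measurable (ξ k)) (n : ℕ) : pastSigma ξ n ≤ mΩ :=
  iSup₂_le fun i _ => (hξ i).comap_le

lemma ProbabilityTheory.iIndepFun.indep_pastSigma (hξ : ∀ k, Measurable (ξ k))
    (hind : iIndepFun ξ μ) (n : ℕ) :
    Indep (pastSigma ξ n) (MeasurableSpace.comap (ξ n) inferInstance) μ :=
  indep_of_indep_of_le_right
    (indep_iSup_of_disjoint (fun i => (hξ i).comap_le) hind.iIndep (S := Set.Iio n) (T := {n})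
      (by simp))
    (le_iSup₂ (f := fun i (_ : i ∈ ({n} : Set ℕ)) => MeasurableSpace.comap (ξ i) inferInstance)
      n rfl)

variable [IsProbabilityMeasure μ] [Countable S] [MeasurableSingletonClass S]
  (hξ : ∀ k, Measurable (ξ k)) (hind : iIndepFun ξ μ)
  {W : ℕ → Ω → S} (hW : ∀ n, Measurable[pastSigma ξ n] (W n)) {h : E → S → T}
  (hh : Measurable (Function.uncurry h)) {ρ : Measure T}
  (hlaw : ∀ k s, HasLaw (fun ω => h (ξ k ω) s) ρ μ)
include hξ hind hW hh hlaw

theorem measure_biInter_preimage_eq_prod (I : Finset ℕ) {B : ℕ → Set T}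
    (hB : ∀ k ∈ I, MeasurableSet (B k)) :
    μ (⋂ k ∈ I, (fun ω => h (ξ k ω) (W k ω)) ⁻¹' B k) = ∏ k ∈ I, ρ (B k) := by
  induction I using Finset.induction_on_max with
  | empty => simp
  | insert n I hlt ih =>
    have hpast : MeasurableSet[pastSigma ξ n] (⋂ k ∈ I, (fun ω => h (ξ k ω) (W k ω)) ⁻¹' B k) :=
      .biInter I.countable_toSet fun k hk =>
        (hh.comp ((measurable_pastSigma (hlt k hk)).prodMk
          ((hW k).mono (pastSigma_mono (hlt k hk).le) le_rfl)))
          (hB k (Finset.mem_insert_of_mem hk))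
    rw [Finset.set_biInter_insert, Set.inter_comm,
      measure_inter_preimage_eq_mul_of_indep (pastSigma_le hξ n) (hind.indep_pastSigma hξ n)
        (hW n) hh (hlaw n) hpast (hB n (Finset.mem_insert_self n I)),
      ih fun k hk => hB k (Finset.mem_insert_of_mem hk),
      Finset.prod_insert fun hn => (hlt n hn).false, mul_comm]

theorem iIndepFun_and_hasLaw_of_adapted :
    iIndepFun (fun k ω => h (ξ k ω) (W k ω)) μ ∧
      ∀ k, HasLaw (fun ω => h (ξ k ω) (W k ω)) ρ μ := by
  have hprod := measure_biInter_preimage_eq_prod hξ hind hW hh hlaw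
  have hmarg (k : ℕ) {B : Set T} (hB : MeasurableSet B) :
      μ ((fun ω => h (ξ k ω) (W k ω)) ⁻¹' B) = ρ B := by
    simpa using hprod {k} (B := fun _ => B) (by simp [hB])
  have hmeas (k : ℕ) : Measurable fun ω => h (ξ k ω) (W k ω) :=
    hh.comp ((hξ k).prodMk ((hW k).mono (pastSigma_le hξ k) le_rfl))
  refine ⟨iIndepFun_iff_measure_inter_preimage_eq_mul.2 fun I sets hsets => ?_,
    fun k => ⟨(hmeas k).aemeasurable, Measure.ext fun B hB => ?_⟩⟩
  · rw [hprod I hsets]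
    exact Finset.prod_congr rfl fun k hk => (hmarg k (hsets k hk)).symm
  · rw [Measure.map_apply (hmeas k) hB, hmarg k hB]

end StateDriven

def foldAt (m : ℕ) (p : ℕ × ℕ) : ℕ × ℕ :=
  if p.1 < m then p else (p.2 + m, p.1 - m)

lemma foldAt_involutive (m : ℕ) : Function.Involutive (foldAt m) := by
  rintro ⟨i, j⟩
  by_cases h : i < m
  · simp [foldAt, h]
  · simp [foldAt, h]
    omega

lemma foldAt_fst_add_snd (m : ℕ) (p : ℕ × ℕ) :
    (foldAt m p).1 + (foldAt m p).2 = p.1 + p.2 := by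
  unfold foldAt
  split_ifs <;> omega

lemma zstep_neg_natCast_sub (z : ℤ) (i j : ℕ) :
    zstep (-i, j) z - z = (foldAt (-z).toNat (i, j)).1 := by
  have hne : ((-i : ℤ), (j : ℤ)) ≠ (1, -1) := by simp
  unfold zstep foldAt
  split_ifs <;> simp_all <;> omega

lemma nuMass_neg_natCast (i j : ℕ) : nuMass (-i, j) = 2⁻¹ ^ (i + j + 3) := by
  have hne : ((-i : ℤ), (j : ℤ)) ≠ (1, -1) := by simp
  rw [nuMass, if_neg hne, if_pos (by simp)]
  congr 1
  omega

lemma tsum_nuMass_mul (f : ℤ × ℤ → ℝ≥0∞) :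
    ∑' d, nuMass d * f d
      = 2⁻¹ * f (1, -1) + ∑' p : ℕ × ℕ, 2⁻¹ ^ (p.1 + p.2 + 3) * f (-p.1, p.2) := by
  rw [ENNReal.tsum_eq_add_tsum_ite (1, -1), nuMass, if_pos rfl, one_div]
  congr 1
  have hinj : Function.Injective (fun p : ℕ × ℕ => ((-p.1 : ℤ), (p.2 : ℤ))) := by
    intro p q h
    simp only [Prod.mk.injEq, neg_inj, Nat.cast_inj] at h
    exact Prod.ext h.1 h.2
  rw [← hinj.tsum_eq]
  · refine tsum_congr fun p => ?_
    rw [if_neg (by simp), nuMass_neg_natCast]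
  · rintro ⟨a, b⟩ hd
    by_cases h1 : (a, b) = ((1 : ℤ), (-1 : ℤ))
    · simp [h1] at hd
    · have : a ≤ 0 ∧ 0 ≤ b := by
        by_contra h
        simp [nuMass, h1, h] at hd
      exact ⟨((-a).toNat, b.toNat), by simp; omega⟩

lemma ENNReal.tsum_inv_two_pow_add_succ (c : ℕ) :
    ∑' b : ℕ, (2⁻¹ : ℝ≥0∞) ^ (c + (b + 1)) = 2⁻¹ ^ c := by
  simp_rw [pow_add _ c, ENNReal.tsum_mul_left, ENNReal.tsum_geometric_add_one,
    ENNReal.one_sub_inv_two, inv_inv, ENNReal.inv_mul_cancel two_ne_zero ENNReal.ofNat_ne_top,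
    mul_one]

lemma tsum_inv_two_pow_mul_ite_fst_eq (w : ℤ) :
    ∑' q : ℕ × ℕ, 2⁻¹ ^ (q.1 + q.2 + 3) * (if (q.1 : ℤ) = w then 1 else 0)
      = if 0 ≤ w then (2⁻¹ : ℝ≥0∞) ^ (w + 2).toNat else 0 := by
  rw [ENNReal.tsum_prod']
  split_ifs with hw
  · lift w to ℕ using hw with n
    rw [tsum_eq_single n (fun a ha => by simp [ha])]
    simp only [if_true, mul_one]
    rw [show (n + 2 : ℤ).toNat = n + 2 by omega, ← ENNReal.tsum_inv_two_pow_add_succ]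
    exact tsum_congr fun b => by ring_nf
  · simp
    omega

lemma tsum_nuMass_mul_ite_zstep_sub (z w : ℤ) :
    ∑' d, nuMass d * (if zstep d z - z = w then 1 else 0) = muMass w := by
  set g : ℕ × ℕ → ℝ≥0∞ := fun q => 2⁻¹ ^ (q.1 + q.2 + 3) * if (q.1 : ℤ) = w then 1 else 0
  have hfold (p : ℕ × ℕ) :
      2⁻¹ ^ (p.1 + p.2 + 3) * (if zstep (-p.1, p.2) z - z = w then 1 else 0)
        = g (foldAt (-z).toNat p) := by
    simp only [g, zstep_neg_natCast_sub, foldAt_fst_add_snd]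
  have hperm := (foldAt_involutive (-z).toNat).toPerm.tsum_eq g
  rw [Function.Involutive.coe_toPerm] at hperm
  have hdown : zstep (1, -1) z - z = -1 := by simp [zstep]
  rw [tsum_nuMass_mul, tsum_congr hfold, hperm, tsum_inv_two_pow_mul_ite_fst_eq, hdown, muMass]
  split_ifs <;> first | omega | norm_num

noncomputable def muMeasure : Measure ℤ :=
  Measure.sum fun z => muMass z • Measure.dirac z

lemma muMeasure_singleton (z : ℤ) : muMeasure {z} = muMass z :=
  Measure.sum_smul_dirac_singleton

lemma hasLaw_zstep_sub {Ω : Type*} [MeasurableSpace Ω] {μ : Measure Ω} {X : Ω → ℤ × ℤ}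
    (hX : Measurable X) (hlaw : ∀ d, μ {ω | X ω = d} = nuMass d) (z : ℤ) :
    HasLaw (fun ω => zstep (X ω) z - z) muMeasure μ := by
  have hmeas : Measurable fun ω => zstep (X ω) z - z :=
    (Measurable.of_discrete (f := fun d : ℤ × ℤ => zstep d z - z)).comp hX
  refine ⟨hmeas.aemeasurable, Measure.ext_of_singleton fun w => ?_⟩
  rw [Measure.map_apply hmeas (measurableSet_singleton w), muMeasure_singleton,
    ← tsum_nuMass_mul_ite_zstep_sub z w]
  change μ (X ⁻¹' {d | zstep d z - z = w}) = _
  rw [← tsum_measure_preimage_singleton (Set.to_countable _)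
      fun d _ => hX (measurableSet_singleton d),
    tsum_subtype (f := fun d => μ (X ⁻¹' {d}))]
  refine tsum_congr fun d => ?_
  rw [Set.indicator_apply, mul_ite, mul_one, mul_zero]
  exact if_congr Iff.rfl (hlaw d) rfl

lemma measurable_pastSigma_Zproc {Ω : Type*} (ξ : ℕ → Ω → ℤ × ℤ) (n : ℕ) :
    Measurable[pastSigma ξ n] (Zproc ξ n) := by
  induction n with
  | zero => exact measurable_const
  | succ k ih =>
    exact (Measurable.of_discrete (f := fun p : (ℤ × ℤ) × ℤ => zstep p.1 p.2)).comp
      ((measurable_pastSigma k.lt_succ_self).prodMk (ih.mono (pastSigma_mono k.le_succ) le_rfl))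

/-- If `(ξ_k)` are i.i.d. with law `ν`, then the process `(Z_k)` defined by the coalescent-walk
recursion is a random walk: its increments `(Z_{k+1} - Z_k)` are independent and identically
distributed, with law `μ` given by `μ({-1}) = 1/2` and `μ({j}) = 2^{-j-2}` for `j ≥ 0`. -/
theorem Zproc_isRandomWalk {Ω : Type*} [MeasurableSpace Ω]
    (μ : Measure Ω) [IsProbabilityMeasure μ]
    (ξ : ℕ → Ω → ℤ × ℤ) (hmeas : ∀ k, Measurable (ξ k))
    (hindep : iIndepFun ξ μ)
    (hdist : ∀ k, ∀ d : ℤ × ℤ, μ {ω | ξ k ω = d} = nuMass d) :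
    iIndepFun
      (fun k ω => Zproc ξ (k + 1) ω - Zproc ξ k ω) μ ∧
    ∀ k, ∀ z : ℤ, μ {ω | Zproc ξ (k + 1) ω - Zproc ξ k ω = z} = muMass z := by
  obtain ⟨hindep_incr, hlaw_incr⟩ := iIndepFun_and_hasLaw_of_adapted
    (h := fun d z => zstep d z - z) hmeas hindep (measurable_pastSigma_Zproc ξ)
    .of_discrete fun k z => hasLaw_zstep_sub (hmeas k) (hdist k) z
  exact ⟨hindep_incr, fun k z =>
    ((hlaw_incr k).measure_eq (measurableSet_singleton z)).trans (muMeasure_singleton z)⟩
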